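/- Let m, n ≥ 1 and let c = c_0, c_1, …, c_L = c′ be a sequence of proper 3-colorings of the m×n grid graph in which consecutive colorings differ at exactly one vertex. If h is a height function for c, then there exists a height function h′ for c′ with Σ_v |h(v) − h′(v)| ≤ 2L. In particular, any such recoloring sequence from c to c′ has length at least (1/2)·min Σ_v |h(v) − h′(v)|, the minimum taken over height functions h′ for c′. -/
import Mathlib


/-- Adjacency in the `m × n` grid graph: two vertices are adjacent iff they differ by
`1` in exactly one coordinate. -/
def GridAdj {m n : ℕ} (u v : Fin m × Fin n) : Prop :=
  (u.1 = v.1 ∧ ((u.2 : ℕ) = (v.2 : ℕ) + 1 ∨ (v.2 : ℕ) = (u.2 : ℕ) + 1)) ∨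
  (u.2 = v.2 ∧ ((u.1 : ℕ) = (v.1 : ℕ) + 1 ∨ (v.1 : ℕ) = (u.1 : ℕ) + 1))

/-- A proper 3-coloring of the `m × n` grid graph. -/
def Proper3 {m n : ℕ} (c : Fin m × Fin n → ZMod 3) : Prop :=
  ∀ u v : Fin m × Fin n, GridAdj u v → c u ≠ c v

/-- A height function for a 3-coloring `c`: congruent to `c` mod 3 at every vertex,
and differing by exactly `1` across every edge of the grid graph. -/
def IsHeight {m n : ℕ} (c : Fin m × Fin n → ZMod 3) (h : Fin m × Fin n → ℤ) : Prop :=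
  (∀ v : Fin m × Fin n, ((h v : ℤ) : ZMod 3) = c v) ∧
  ∀ u v : Fin m × Fin n, GridAdj u v → |h u - h v| = 1

lemma gridAdj_symm {m n : ℕ} {u v : Fin m × Fin n} (hadj : GridAdj u v) : GridAdj v u := by
  unfold GridAdj at *; tauto

lemma gridAdj_ne {m n : ℕ} {u v : Fin m × Fin n} (hadj : GridAdj u v) : u ≠ v := by
  rintro rfl
  rcases hadj with ⟨_, h2⟩ | ⟨_, h2⟩ <;> omega

lemma zmod3_third : ∀ x y e : ZMod 3, (e = 1 ∨ e = -1) → y ≠ x → y ≠ x + e → y = x + 2*e := by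
  decide

lemma zmod3_two_mul : ∀ e : ZMod 3, 2*e = -e := by decide

lemma zmod3_third' : ∀ x y : ZMod 3, y ≠ x → y ≠ x + 1 → y = x - 1 := by decide

lemma step_lemma {m n : ℕ} (c c' : Fin m × Fin n → ZMod 3)
    (hc' : Proper3 c') (v : Fin m × Fin n)
    (hv : c' v ≠ c v) (hoff : ∀ u, u ≠ v → c' u = c u)
    (h : Fin m × Fin n → ℤ) (hh : IsHeight c h) :
    ∃ h' : Fin m × Fin n → ℤ, IsHeight c' h' ∧ (∀ u, u ≠ v → h' u = h u) ∧
      |h v - h' v| ≤ 2 := by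
  obtain ⟨hmod, hedge⟩ := hh
  by_cases hex : ∃ u, GridAdj v u
  · obtain ⟨u0, hu0⟩ := hex
    set e : ℤ := h u0 - h v with he_def
    have he : e = 1 ∨ e = -1 := by
      have := hedge v u0 hu0
      rw [abs_sub_comm] at this
      rcases abs_eq (by norm_num : (0:ℤ) ≤ 1) |>.1 this with h1 | h1 <;> omega
    have he' : ((e : ℤ) : ZMod 3) = 1 ∨ ((e : ℤ) : ZMod 3) = -1 := by
      rcases he with h1 | h1 <;> rw [h1] <;> simp
    -- color of v in c'
    have hcv : c' v = c v + 2 * ((e : ℤ) : ZMod 3) := by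
      apply zmod3_third _ _ _ he' hv
      have h1 : c' v ≠ c' u0 := hc' v u0 hu0
      have h2 : c' u0 = c u0 := hoff u0 (Ne.symm (gridAdj_ne hu0))
      have h3 : c u0 = c v + ((e : ℤ) : ZMod 3) := by
        rw [← hmod u0, ← hmod v, he_def]; push_cast; ring
      rw [h2, h3] at h1; exact h1
    -- every neighbor w of v has h w = h v + e
    have hnb : ∀ w, GridAdj v w → h w = h v + e := by
      intro w hw
      have h1 := hedge v w hw
      have habs := abs_eq (by norm_num : (0:ℤ) ≤ 1) |>.1 h1
      by_contra hne
      have hwval : h w = h v - e := by rcases he with h2 | h2 <;> omega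
      have hcw : c w = c v - ((e : ℤ) : ZMod 3) := by
        rw [← hmod w, ← hmod v, hwval]; push_cast; ring
      have h2 : c' w = c w := hoff w (Ne.symm (gridAdj_ne hw))
      have h3 : c' v ≠ c' w := hc' v w hw
      rw [h2, hcw, hcv, zmod3_two_mul] at h3
      exact h3 (by ring)
    refine ⟨Function.update h v (h v + 2 * e), ⟨?_, ?_⟩, ?_, ?_⟩
    · intro u
      by_cases hu : u = v
      · subst hu
        rw [Function.update_self, hcv, ← hmod u]
        push_cast; ring
      · rw [Function.update_of_ne hu, hmod u, hoff u hu]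
    · intro u w hadj
      have huw : u ≠ w := gridAdj_ne hadj
      by_cases hu : u = v
      · subst hu
        rw [Function.update_self, Function.update_of_ne (Ne.symm huw),
          hnb w hadj]
        have : h u + 2 * e - (h u + e) = e := by ring
        rw [this]
        rcases he with h1 | h1 <;> rw [h1] <;> norm_num
      · by_cases hw : w = v
        · subst hw
          rw [Function.update_self, Function.update_of_ne hu,
            hnb u (gridAdj_symm hadj)]
          have : h w + e - (h w + 2 * e) = -e := by ring
          rw [this]
          rcases he with h1 | h1 <;> rw [h1] <;> norm_num
        · rw [Function.update_of_ne hu, Function.update_of_ne hw]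
          exact hedge u w hadj
    · intro u hu; exact Function.update_of_ne hu _ _
    · rw [Function.update_self]
      rcases he with h1 | h1 <;> rw [h1] <;> norm_num
  · -- no neighbors
    set d : ℤ := if c' v = c v + 1 then 1 else -1 with hd_def
    refine ⟨Function.update h v (h v + d), ⟨?_, ?_⟩, ?_, ?_⟩
    · intro u
      by_cases hu : u = v
      · subst hu
        rw [Function.update_self]
        by_cases hc1 : c' u = c u + 1
        · simp only [hd_def, if_pos hc1]
          rw [hc1, ← hmod u]; push_cast; ring
        · simp only [hd_def, if_neg hc1]
          rw [zmod3_third' _ _ hv hc1, ← hmod u]; push_cast; ring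
      · rw [Function.update_of_ne hu, hmod u, hoff u hu]
    · intro u w hadj
      have hu : u ≠ v := by rintro rfl; exact hex ⟨w, hadj⟩
      have hw : w ≠ v := by rintro rfl; exact hex ⟨u, gridAdj_symm hadj⟩
      rw [Function.update_of_ne hu, Function.update_of_ne hw]
      exact hedge u w hadj
    · intro u hu; exact Function.update_of_ne hu _ _
    · rw [Function.update_self]
      rcases ite_eq_or_eq (c' v = c v + 1) (1:ℤ) (-1) with h1 | h1 <;>
        rw [hd_def] <;> rw [h1] <;> norm_num

/-- Along a sequence `c 0, …, c L` of proper 3-colorings in which consecutive colorings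
differ at exactly one vertex, a height function `h` for `c 0` can be carried to a height
function `h'` for `c L` with `∑ v, |h v - h' v| ≤ 2 L`; in particular any such
recoloring sequence has length at least half the minimum of `∑ v, |h v - h' v|` over
height functions `h'` for `c L`. -/
theorem height_function_lower_bound (m n : ℕ) (hm : 1 ≤ m) (hn : 1 ≤ n) (L : ℕ)
    (c : ℕ → Fin m × Fin n → ZMod 3)
    (hproper : ∀ k ≤ L, Proper3 (c k))
    (hstep : ∀ k < L, ∃ v, c (k + 1) v ≠ c k v ∧ ∀ u, u ≠ v → c (k + 1) u = c k u)
    (h : Fin m × Fin n → ℤ) (hh : IsHeight (c 0) h) :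
    (∃ h' : Fin m × Fin n → ℤ, IsHeight (c L) h' ∧
      ∑ v : Fin m × Fin n, |h v - h' v| ≤ 2 * (L : ℤ)) ∧
    (∀ M : ℤ, (∀ h' : Fin m × Fin n → ℤ, IsHeight (c L) h' →
        M ≤ ∑ v : Fin m × Fin n, |h v - h' v|) → M ≤ 2 * (L : ℤ)) := by
  have key : ∀ k ≤ L, ∃ h' : Fin m × Fin n → ℤ, IsHeight (c k) h' ∧
      ∑ v : Fin m × Fin n, |h v - h' v| ≤ 2 * (k : ℤ) := by
    intro k
    induction k with
    | zero =>
      intro _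
      exact ⟨h, hh, by simp⟩
    | succ k ih =>
      intro hk
      obtain ⟨h', hh', hsum⟩ := ih (by omega)
      obtain ⟨v, hv, hoff⟩ := hstep k (by omega)
      obtain ⟨h'', hh'', hoff'', hbd⟩ :=
        step_lemma (c k) (c (k+1)) (hproper (k+1) hk) v hv hoff h' hh'
      refine ⟨h'', hh'', ?_⟩
      have h1 : ∑ u : Fin m × Fin n, |h' u - h'' u| ≤ 2 := by
        have : ∑ u : Fin m × Fin n, |h' u - h'' u| = |h' v - h'' v| := by
          apply Finset.sum_eq_single_of_mem v (Finset.mem_univ v)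
          intro u _ hu
          rw [hoff'' u hu]; simp
        rw [this]; exact hbd
      calc ∑ u : Fin m × Fin n, |h u - h'' u|
          ≤ ∑ u : Fin m × Fin n, (|h u - h' u| + |h' u - h'' u|) :=
            Finset.sum_le_sum (fun u _ => abs_sub_le _ _ _)
        _ = (∑ u : Fin m × Fin n, |h u - h' u|) + ∑ u : Fin m × Fin n, |h' u - h'' u| :=
            Finset.sum_add_distrib
        _ ≤ 2 * (k : ℤ) + 2 := add_le_add hsum h1
        _ = 2 * ((k+1 : ℕ) : ℤ) := by push_cast; ring
  obtain ⟨h', hh', hsum⟩ := key L le_rfl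
  exact ⟨⟨h', hh', hsum⟩, fun M hM => le_trans (hM h' hh') hsum⟩
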